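/- Let 1 ≤ α < ω₁. If ω^α →_cl (ω^α, 3)², then α → (α, 3)², i.e., α is a partition ordinal. -/

import Mathlib

open Ordinal Set

/-- Cantor–Bendixson rank of an ordinal: the exponent of the last term of its
Cantor normal form, with `CB 0 = 0`. -/
noncomputable def CB (o : Ordinal) : Ordinal :=
  ((Ordinal.CNF Ordinal.omega0 o).getLast?.map Prod.fst).getD 0

/-- `X` is a closed copy of the ordinal `β`: there is an order isomorphism onto
`Iio β` (with the topology induced from the order topology on `Ordinal`) which
is a homeomorphism. -/
def IsClosedCopy (X : Set Ordinal) (β : Ordinal) : Prop :=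
  ∃ f : X ≃o (Set.Iio β), Continuous f ∧ Continuous f.symm

/-- `X` is homogeneous of color `i` for the pair coloring `c`. -/
def Homog (c : Ordinal → Ordinal → Fin 2) (X : Set Ordinal) (i : Fin 2) : Prop :=
  ∀ x ∈ X, ∀ y ∈ X, x < y → c x y = i

/-- The closed partition relation `γ →_cl (α,β)²`. -/
def ClPartition (γ α β : Ordinal) : Prop :=
  ∀ c : Ordinal → Ordinal → Fin 2,
    (∃ X ⊆ Set.Iio γ, IsClosedCopy X α ∧ Homog c X 0) ∨
    (∃ X ⊆ Set.Iio γ, IsClosedCopy X β ∧ Homog c X 1)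

/-- `X` is an order-isomorphic copy of the ordinal `β`. -/
def IsOrderCopy (X : Set Ordinal) (β : Ordinal) : Prop :=
  Nonempty (X ≃o Set.Iio β)

/-- The classical partition relation `γ → (α,β)²`. -/
def ClassPartition (γ α β : Ordinal) : Prop :=
  ∀ c : Ordinal → Ordinal → Fin 2,
    (∃ X ⊆ Set.Iio γ, IsOrderCopy X α ∧ Homog c X 0) ∨
    (∃ X ⊆ Set.Iio γ, IsOrderCopy X β ∧ Homog c X 1)

/-- The ordinal Ramsey number `R(α,β)`: least `γ` with `γ → (α,β)²`. -/
noncomputable def Rord (α β : Ordinal) : Ordinal := sInf {γ | ClassPartition γ α β}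

/-- The closed Ramsey number `R^cl(α,β)`: least `γ` with `γ →_cl (α,β)²`. -/
noncomputable def Rcl (α β : Ordinal) : Ordinal := sInf {γ | ClPartition γ α β}

/-- The first uncountable ordinal. -/
noncomputable def omega1 : Ordinal := (Cardinal.aleph 1).ord

/-!
Color a pair of ordinals below `ω ^ α` by `c` applied to their Cantor–Bendixson ranks `CB`
(pairs of equal rank get color `0`). A `1`-homogeneous triple then has three distinct ranks, which
form a `1`-homogeneous triple for `c`. A `0`-homogeneous closed copy of `ω ^ α` is the range of a
normal function `g`, and by induction on `γ` the ranks of `g` on any interval `[a, a + ω ^ γ)`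
have order type at least `γ`: at a successor `γ = δ + 1`, the rank of `g (a + ω ^ δ)` exceeds the
ranks of all ordinals in a left neighbourhood of it, and by continuity that neighbourhood contains
the values of `g` on a whole interval of length `ω ^ δ` below `a + ω ^ δ`. So the ranks contain a
copy of `α`, which is `0`-homogeneous for `c`.
-/

universe u v

@[simp]
lemma CB_zero : CB 0 = 0 := by simp [CB, CNF.zero_right]

lemma CB_le_log {x : Ordinal} (hx : x ≠ 0) : CB x ≤ log ω x := by
  have hne : CNF ω x ≠ [] := by simp [CNF.ne_zero hx]
  rw [CB, List.getLast?_eq_some_getLast hne]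
  exact CNF.fst_le_log (List.getLast_mem hne)

lemma CB_lt_of_lt_opow {x α : Ordinal} (hα : 0 < α) (hx : x < ω ^ α) : CB x < α := by
  rcases eq_or_ne x 0 with rfl | hx0
  · simpa using hα
  · exact (CB_le_log hx0).trans_lt ((lt_opow_iff_log_lt one_lt_omega0 hx0).mp hx)

lemma CB_opow_mul {L k : Ordinal} (hk0 : k ≠ 0) (hk : k < ω) : CB (ω ^ L * k) = L := by
  simpa [CB, CNF.zero_right] using
    congrArg (fun l => (l.getLast?.map Prod.fst).getD 0)
      (CNF.opow_mul_add (y := 0) one_lt_omega0 hk0 hk (opow_pos L omega0_pos))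

lemma CB_opow_mul_add {L k x : Ordinal} (hk : k < ω) (hx : x < ω ^ L) (hx0 : x ≠ 0) :
    CB (ω ^ L * k + x) = CB x := by
  rcases eq_or_ne k 0 with rfl | hk0
  · simp
  have hne : CNF ω x ≠ [] := by simp [CNF.ne_zero hx0]
  simp only [CB, CNF.opow_mul_add one_lt_omega0 hk0 hk hx, List.getLast?_cons_of_ne_nil hne]

lemma exists_CB_lt_of_ne_zero (ξ : Ordinal) (hξ : ξ ≠ 0) :
    ∃ u < ξ, ∀ x ∈ Ioo u ξ, CB x < CB ξ := by
  induction ξ using WellFoundedLT.induction with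
  | _ ξ IH =>
  set L := log ω ξ
  set k := ξ / ω ^ L
  set r := ξ % ω ^ L
  have hξ_eq : ω ^ L * k + r = ξ := div_add_mod ξ (ω ^ L)
  have hk0 : k ≠ 0 := ((div_pos (opow_ne_zero _ omega0_ne_zero)).mpr (opow_log_le_self ω hξ)).ne'
  have hk : k < ω := div_opow_log_lt ξ one_lt_omega0
  have hr : r < ω ^ L := mod_lt ξ (opow_ne_zero _ omega0_ne_zero)
  clear_value L k r
  subst hξ_eq
  -- If `r = 0`, every point of `(ω ^ L * (k - 1), ξ)` has rank below `L = CB ξ`;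
  -- otherwise `CB ξ = CB r` and the points near `ξ` are `ω ^ L * k` plus points near `r`.
  rcases eq_or_ne r 0 with rfl | hr0
  · obtain ⟨n, rfl⟩ := lt_omega0.mp hk
    obtain ⟨m, rfl⟩ := Nat.exists_eq_succ_of_ne_zero (by exact_mod_cast hk0 : n ≠ 0)
    refine ⟨ω ^ L * m, ?_, ?_⟩
    · rw [add_zero, Nat.cast_succ, mul_add_one]
      exact lt_add_of_pos_right _ (opow_pos L omega0_pos)
    rintro x ⟨hux, hxξ⟩
    obtain ⟨y, rfl⟩ := exists_add_of_le hux.le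
    have hy0 : y ≠ 0 := by rintro rfl; simp at hux
    have hy : y < ω ^ L := by
      rw [add_zero, Nat.cast_succ, mul_add_one] at hxξ
      exact lt_of_add_lt_add_left hxξ
    rw [CB_opow_mul_add (natCast_lt_omega0 m) hy hy0, add_zero, CB_opow_mul hk0 hk]
    exact (CB_le_log hy0).trans_lt ((lt_opow_iff_log_lt one_lt_omega0 hy0).mp hy)
  · have hrξ : r < ω ^ L * k + r :=
      hr.trans_le ((le_mul_left _ (pos_iff_ne_zero.mpr hk0)).trans le_self_add)
    obtain ⟨u, hur, hu⟩ := IH r hrξ hr0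
    refine ⟨ω ^ L * k + u, add_lt_add_right hur _, ?_⟩
    rintro x ⟨hux, hxξ⟩
    obtain ⟨y, rfl⟩ := exists_add_of_le (le_self_add.trans hux.le)
    have hy : y ∈ Ioo u r := ⟨lt_of_add_lt_add_left hux, lt_of_add_lt_add_left hxξ⟩
    have hy0 : y ≠ 0 := (hy.1.trans_le' zero_le).ne'
    rw [CB_opow_mul_add hk (hy.2.trans hr) hy0, CB_opow_mul_add hk hr hr0]
    exact hu y hy

lemma typeLT_inter_Iio_lt {D : Set Ordinal.{u}} {v : Ordinal.{u}} (hv : v ∈ D) :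
    typeLT ↥(D ∩ Iio v) < typeLT D := by
  refine lt_of_le_of_lt ?_ (typein_lt_type (· < ·) (⟨v, hv⟩ : D))
  rw [← type_subrel, type_le_iff']
  exact ⟨⟨⟨fun x => ⟨⟨x.1, x.2.1⟩, x.2.2⟩, fun x y h => Subtype.ext (congrArg (·.1.1) h)⟩,
    Iff.rfl⟩⟩

lemma lift_succ_le_typeLT {D : Set Ordinal.{u}} {v δ : Ordinal.{u}} (hv : v ∈ D)
    (h : lift.{u + 1} δ ≤ typeLT ↥(D ∩ Iio v)) : lift.{u + 1} (Order.succ δ) ≤ typeLT D := by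
  rw [lift_succ]
  exact Order.succ_le_of_lt (h.trans_lt (typeLT_inter_Iio_lt hv))

lemma lift_le_of_isSuccLimit {γ : Ordinal.{u}} {t : Ordinal.{u + 1}} (hγ : Order.IsSuccLimit γ)
    (h : ∀ β < γ, lift.{u + 1} β ≤ t) : lift.{u + 1} γ ≤ t := by
  rw [(isSuccLimit_lift.mpr hγ).le_iff_forall_le]
  intro c hc
  obtain ⟨β, hβ, rfl⟩ := lt_lift_iff.mp hc
  exact h β hβ

lemma exists_isOrderCopy_of_lift_le_typeLT {D : Set Ordinal.{u}} {γ : Ordinal.{u}}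
    (h : lift.{u + 1} γ ≤ typeLT D) : ∃ Y ⊆ D, IsOrderCopy Y γ := by
  rw [← type_lt_Iio, type_le_iff'] at h
  obtain ⟨f⟩ := h
  have hf : StrictMono fun i => (f i : Ordinal) := fun i j hij => f.map_rel_iff.mpr hij
  exact ⟨range _, by rintro _ ⟨i, rfl⟩; exact (f i).2, ⟨(hf.orderIso _).symm⟩⟩

lemma isOrderCopy_natCast_iff {X : Set Ordinal.{u}} {n : ℕ} :
    IsOrderCopy.{u, v} X n ↔ Cardinal.mk X = n := by
  have h := lift_type_eq.{u + 1, v + 1, 0} (r := (· < · : X → X → Prop))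
    (s := (· < · : Iio (n : Ordinal.{v}) → Iio (n : Ordinal.{v}) → Prop))
  rw [type_lt_Iio, lift_lift, lift_natCast, ← lift_natCast.{v + 1, u + 1} n, lift_inj,
    ← card_eq_nat, card_type] at h
  rw [h, IsOrderCopy]
  exact ⟨fun ⟨f⟩ => ⟨f.toRelIsoLT⟩, fun ⟨f⟩ => ⟨.ofRelIsoLT f⟩⟩

noncomputable def pullbackColoring (c : Ordinal → Ordinal → Fin 2) (φ : Ordinal → Ordinal) :
    Ordinal → Ordinal → Fin 2 := fun x y =>
  if φ x < φ y then c (φ x) (φ y) else if φ y < φ x then c (φ y) (φ x) else 0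

lemma Homog.mono {c : Ordinal → Ordinal → Fin 2} {X Y : Set Ordinal} {i : Fin 2}
    (h : Homog c X i) (hYX : Y ⊆ X) : Homog c Y i :=
  fun x hx y hy hxy => h x (hYX hx) y (hYX hy) hxy

lemma Homog.image_of_pullback {c : Ordinal → Ordinal → Fin 2} {φ : Ordinal → Ordinal}
    {X : Set Ordinal} {i : Fin 2} (h : Homog (pullbackColoring c φ) X i) :
    Homog c (φ '' X) i := by
  rintro _ ⟨x, hx, rfl⟩ _ ⟨y, hy, rfl⟩ hxy
  rcases lt_or_gt_of_ne (fun hxy' : x = y => hxy.ne (congrArg φ hxy')) with h' | h'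
  · simpa [pullbackColoring, hxy] using h x hx y hy h'
  · simpa [pullbackColoring, hxy, hxy.not_gt] using h y hy x hx h'

lemma Homog.injOn_of_pullback {c : Ordinal → Ordinal → Fin 2} {φ : Ordinal → Ordinal}
    {X : Set Ordinal} (h : Homog (pullbackColoring c φ) X 1) : InjOn φ X := by
  intro x hx y hy hxy
  by_contra hne
  rcases lt_or_gt_of_ne hne with h' | h'
  · simpa [pullbackColoring, hxy] using h x hx y hy h'
  · simpa [pullbackColoring, hxy] using h y hy x hx h'

lemma IsClosedCopy.exists_isNormal {X : Set Ordinal.{u}} {o : Ordinal.{u}}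
    (hX : IsClosedCopy X o) : ∃ g : Iio o → Ordinal.{u}, Order.IsNormal g ∧ range g = X := by
  obtain ⟨f, -, hf⟩ := hX
  refine ⟨fun x => f.symm x, ?_, (f.symm.surjective.range_comp _).trans Subtype.range_coe⟩
  rw [Order.isNormal_iff_strictMono_and_continuous]
  exact ⟨fun x y hxy => f.symm.strictMono hxy, continuous_subtype_val.comp hf⟩

lemma Order.isSuccLimit_of_subtypeVal {α : Type*} [Preorder α] {s : Set α} (hs : IsLowerSet s)
    {a : s} (ha : Order.IsSuccLimit a.1) : Order.IsSuccLimit a := by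
  refine ⟨fun hmin => ha.1 fun b hb => hmin (b := ⟨b, hs hb a.2⟩) hb, fun b hb => ?_⟩
  exact ha.2 b.1 ⟨hb.1, fun c h₁ h₂ => hb.2 (c := ⟨c, hs h₂.le a.2⟩) h₁ h₂⟩

lemma add_one_add_opow_eq {a w δ : Ordinal} (hδ : δ ≠ 0) (haw : a ≤ w) (hw : w < a + ω ^ δ) :
    w + 1 + ω ^ δ = a + ω ^ δ := by
  obtain ⟨t, rfl⟩ := exists_add_of_le haw
  have ht : t + 1 < ω ^ δ := by
    rw [← Order.succ_eq_add_one]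
    exact (isSuccLimit_opow_left isSuccLimit_omega0 hδ).succ_lt (lt_of_add_lt_add_left hw)
  rw [add_assoc a t 1, add_assoc a, add_of_omega0_opow_le ht le_rfl]

section NormalFunction

variable {o : Ordinal.{u}} {g : Iio o → Ordinal.{u}}

def cbRanks (g : Iio o → Ordinal.{u}) (a b : Ordinal.{u}) : Set Ordinal.{u} :=
  (fun x => CB (g x)) '' {x | ↑x ∈ Ico a b}

lemma cbRanks_mono {a a' b b' : Ordinal.{u}} (ha : a ≤ a') (hb : b' ≤ b) :
    cbRanks g a' b' ⊆ cbRanks g a b :=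
  image_mono fun _ hx => ⟨ha.trans hx.1, hx.2.trans_le hb⟩

lemma exists_CB_lt_of_isSuccLimit (hg : Order.IsNormal g) {z : Iio o}
    (hz : Order.IsSuccLimit z.1) : ∃ w < z, ∀ x, w < x → x < z → CB (g x) < CB (g z) := by
  have hz' := Order.isSuccLimit_of_subtypeVal (isLowerSet_Iio o) hz
  obtain ⟨v, hv⟩ := not_isMin_iff.mp hz'.1
  obtain ⟨u, hu, hu'⟩ := exists_CB_lt_of_ne_zero (g z) ((hg.strictMono hv).trans_le' zero_le).ne'
  obtain ⟨w, hwz, huw⟩ := (hg.lt_iff_exists_lt hz').mp hu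
  exact ⟨w, hwz, fun x hwx hxz => hu' _ ⟨huw.trans (hg.strictMono hwx), hg.strictMono hxz⟩⟩

lemma lift_succ_le_typeLT_cbRanks (hg : Order.IsNormal g) {δ : Ordinal.{u}}
    (IH : ∀ a, a + ω ^ δ ≤ o → lift.{u + 1} δ ≤ typeLT (cbRanks g a (a + ω ^ δ)))
    (a : Ordinal.{u}) (hao : a + ω ^ Order.succ δ ≤ o) :
    lift.{u + 1} (Order.succ δ) ≤ typeLT (cbRanks g a (a + ω ^ Order.succ δ)) := by
  have hδ_lt : a + ω ^ δ < a + ω ^ Order.succ δ :=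
    add_lt_add_right ((opow_lt_opow_iff_right one_lt_omega0).mpr (Order.lt_succ δ)) a
  set z : Iio o := ⟨a + ω ^ δ, hδ_lt.trans_le hao⟩
  refine lift_succ_le_typeLT (v := CB (g z)) ⟨z, ⟨le_self_add, hδ_lt⟩, rfl⟩ ?_
  rcases eq_or_ne δ 0 with rfl | hδ
  · simp
  obtain ⟨w, hwz, hw⟩ := exists_CB_lt_of_isSuccLimit hg (z := z)
    (isSuccLimit_add a (isSuccLimit_opow_left isSuccLimit_omega0 hδ))
  have hw'z : max w.1 a < a + ω ^ δ := max_lt hwz (lt_add_of_pos_right a (opow_pos _ omega0_pos))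
  have hshift := add_one_add_opow_eq hδ (le_max_right _ _) hw'z
  refine (IH (max w.1 a + 1) (hshift ▸ z.2.le)).trans (type_mono ?_)
  rintro _ ⟨x, ⟨hx₁, hx₂⟩, rfl⟩
  rw [hshift] at hx₂
  have hwx : w.1 < x :=
    (le_max_left _ _).trans_lt ((Order.lt_add_one_iff.mpr le_rfl).trans_le hx₁)
  exact ⟨⟨x, ⟨(le_max_right _ _).trans (le_self_add.trans hx₁), hx₂.trans hδ_lt⟩, rfl⟩,
    hw x hwx hx₂⟩

theorem lift_le_typeLT_cbRanks (hg : Order.IsNormal g) (γ : Ordinal.{u}) :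
    ∀ a, a + ω ^ γ ≤ o → lift.{u + 1} γ ≤ typeLT (cbRanks g a (a + ω ^ γ)) := by
  induction γ using WellFoundedLT.induction with
  | _ γ IH =>
  rcases zero_or_succ_or_isSuccLimit γ with rfl | ⟨δ, rfl⟩ | hγ
  · simp
  · exact lift_succ_le_typeLT_cbRanks hg (IH δ (Order.lt_succ δ))
  · intro a hao
    refine lift_le_of_isSuccLimit hγ fun β hβ => ?_
    have hβγ : a + ω ^ β ≤ a + ω ^ γ := add_le_add_right (opow_le_opow_right omega0_pos hβ.le) a
    exact (IH β hβ a (hβγ.trans hao)).trans (type_mono (cbRanks_mono le_rfl hβγ))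

end NormalFunction

theorem stmt_5_general (α : Ordinal) (h1 : 1 ≤ α)
    (h : ClPartition (Ordinal.omega0 ^ α) (Ordinal.omega0 ^ α) 3) :
    ClassPartition α α 3 := by
  intro c
  have hCB : MapsTo CB (Iio (ω ^ α)) (Iio α) := fun _ hx =>
    CB_lt_of_lt_opow (Order.one_le_iff_pos.mp h1) hx
  rcases h (pullbackColoring c CB) with ⟨X, hXω, hX, hX0⟩ | ⟨X, hXω, hX, hX1⟩
  · obtain ⟨g, hg, rfl⟩ := hX.exists_isNormal
    obtain ⟨Y, hY, hYα⟩ :=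
      exists_isOrderCopy_of_lift_le_typeLT (lift_le_typeLT_cbRanks hg α 0 (zero_add _).le)
    have hYX : Y ⊆ CB '' range g := hY.trans (image_subset_iff.mpr fun x _ => ⟨g x, ⟨x, rfl⟩, rfl⟩)
    exact Or.inl ⟨Y, hYX.trans ((image_mono hXω).trans hCB.image_subset), hYα,
      hX0.image_of_pullback.mono hYX⟩
  · obtain ⟨f, -, -⟩ := hX
    have hX3 : Cardinal.mk X = 3 := by exact_mod_cast isOrderCopy_natCast_iff.mp ⟨f⟩
    refine Or.inr ⟨CB '' X, (image_mono hXω).trans hCB.image_subset, ?_, hX1.image_of_pullback⟩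
    rw [← Nat.cast_ofNat, isOrderCopy_natCast_iff,
      Cardinal.mk_image_eq_of_injOn _ _ hX1.injOn_of_pullback, hX3, Nat.cast_ofNat]

/-- If `1 ≤ α < ω₁` and `ω^α →_cl (ω^α, 3)²`, then `α → (α,3)²`. -/
theorem stmt_5 (α : Ordinal) (h1 : 1 ≤ α) (h2 : α < omega1)
    (h : ClPartition (Ordinal.omega0 ^ α) (Ordinal.omega0 ^ α) 3) :
    ClassPartition α α 3 :=
  stmt_5_general α h1 h
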